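/- arXiv:1112.0433 — 6 statements merged into one kernel-verified Lean document; each statement's English description precedes it below -/
import Mathlib

section
/- (Representation theorem, first-order-derivative case.) Let d, m ≥ 1, let B be an invertible d×d real matrix, b ∈ ℝ^d, and let T : ℝ^d → ℝ^d be the affine map T(X) = B X + b. Let K₀ ⊆ ℝ^d be a measurable set and K = T(K₀). Let Φ_1,…,Φ_m : ℝ^d → ℝ be differentiable functions, let S ⊆ {1,…,m} be the set of differentiated factors, and for each j ∈ S fix β_j ∈ {1,…,d}. Assume that for every function α : S → {1,…,d} the function X ↦ ∏_{j∈S} (∂Φ_j/∂X_{α(j)})(X) · ∏_{j∉S} Φ_j(X) is Lebesgue integrable on K₀. Then the element integral admits the tensor contraction representation ∫_K ∏_{j∈S} (∂(Φ_j∘T⁻¹)/∂x_{β_j})(x) · ∏_{j∉S} (Φ_j∘T⁻¹)(x) dx = Σ_{α : S→{1,…,d}} A⁰_α G^α, where the reference tensor A⁰_α = ∫_{K₀} ∏_{j∈S} (∂Φ_j/∂X_{α(j)})(X) · ∏_{j∉S} Φ_j(X) dX is independent of B, b and K₀’s image, and the geometry tensor G^α = |det B| · ∏_{j∈S} (B⁻¹)_{α(j)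 β_j}. -/
open MeasureTheory

/-- Representation theorem (first-order-derivative case): under an affine map
`T X = B X + b` with `B` invertible, the element integral of a product of (derivatives
of) reference functions pulled back by `T⁻¹` over `K = T(K₀)` equals the tensor
contraction `∑_α A⁰_α G^α` of a reference tensor `A⁰` and a geometry tensor
`G^α = |det B| ∏_{j∈S} (B⁻¹)_{α(j) β_j}`. -/
theorem stmt8 {d m : ℕ} (hd : 1 ≤ d) (hm : 1 ≤ m)
    (B : Matrix (Fin d) (Fin d) ℝ) (hB : IsUnit B.det) (b : Fin d → ℝ)
    (T Tinv : (Fin d → ℝ) → (Fin d → ℝ))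
    (hT : ∀ X, T X = B.mulVec X + b)
    (hTinv₁ : ∀ X, Tinv (T X) = X) (hTinv₂ : ∀ x, T (Tinv x) = x)
    (K₀ : Set (Fin d → ℝ)) (hK₀ : MeasurableSet K₀)
    (Φ : Fin m → (Fin d → ℝ) → ℝ) (hΦ : ∀ j, Differentiable ℝ (Φ j))
    (S : Finset (Fin m)) (β : Fin m → Fin d)
    (hint : ∀ α : {j // j ∈ S} → Fin d, IntegrableOn (fun X =>
      (∏ j ∈ S.attach, fderiv ℝ (Φ j.1) X (Pi.single (α j) 1)) * ∏ j ∈ Sᶜ, Φ j X) K₀) :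
    (∫ x in T '' K₀,
        (∏ j ∈ S, fderiv ℝ (Φ j ∘ Tinv) x (Pi.single (β j) 1)) *
          ∏ j ∈ Sᶜ, Φ j (Tinv x))
      = ∑ α : {j // j ∈ S} → Fin d,
          (∫ X in K₀,
            (∏ j ∈ S.attach, fderiv ℝ (Φ j.1) X (Pi.single (α j) 1)) *
              ∏ j ∈ Sᶜ, Φ j X) *
          (|B.det| * ∏ j ∈ S.attach, B⁻¹ (α j) (β j.1)) := by
  classical
  have hB1 : B⁻¹ * B = 1 := Matrix.nonsing_inv_mul B hB
  have hTinvf : ∀ x, Tinv x = B⁻¹.mulVec x - B⁻¹.mulVec b := by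
    intro x
    have h := hTinv₂ x
    rw [hT] at h
    have h2 : B.mulVec (Tinv x) = x - b := eq_sub_of_add_eq h
    have h3 := congrArg (B⁻¹.mulVec) h2
    rwa [Matrix.mulVec_mulVec, hB1, Matrix.one_mulVec, Matrix.mulVec_sub] at h3
  have hTinj : Function.Injective T := Function.LeftInverse.injective hTinv₁
  set L : (Fin d → ℝ) →L[ℝ] (Fin d → ℝ) :=
    LinearMap.toContinuousLinearMap (Matrix.mulVecLin B) with hL
  set L' : (Fin d → ℝ) →L[ℝ] (Fin d → ℝ) :=
    LinearMap.toContinuousLinearMap (Matrix.mulVecLin B⁻¹) with hL'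
  have hLapp : ∀ v, L v = B.mulVec v := fun v => rfl
  have hL'app : ∀ v, L' v = B⁻¹.mulVec v := fun v => rfl
  have hTd : ∀ x : Fin d → ℝ, HasFDerivAt T L x := by
    intro x
    have h1 : HasFDerivAt (fun X => B.mulVec X + b) L x := by
      have := (L.hasFDerivAt (x := x)).add_const b
      exact this
    exact h1.congr_of_eventuallyEq (Filter.Eventually.of_forall fun y => hT y)
  have hTinvd : ∀ x : Fin d → ℝ, HasFDerivAt Tinv L' x := by
    intro x
    have h1 : HasFDerivAt (fun y => B⁻¹.mulVec y - B⁻¹.mulVec b) L' x := by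
      have := (L'.hasFDerivAt (x := x)).sub_const (B⁻¹.mulVec b)
      exact this
    exact h1.congr_of_eventuallyEq (Filter.Eventually.of_forall fun y => hTinvf y)
  have hdet : L.det = B.det := by
    show LinearMap.det (Matrix.mulVecLin B) = B.det
    rw [← Matrix.toLin'_apply']
    exact LinearMap.det_toLin' B
  have key : ∀ X : Fin d → ℝ,
      (∏ j ∈ S, fderiv ℝ (Φ j ∘ Tinv) (T X) (Pi.single (β j) 1)) *
          ∏ j ∈ Sᶜ, Φ j (Tinv (T X))
      = ∑ α : {j // j ∈ S} → Fin d,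
          (∏ j ∈ S.attach, B⁻¹ (α j) (β j.1)) *
          ((∏ j ∈ S.attach, fderiv ℝ (Φ j.1) X (Pi.single (α j) 1)) *
            ∏ j ∈ Sᶜ, Φ j X) := by
    intro X
    have h1 : ∀ j : Fin m, fderiv ℝ (Φ j ∘ Tinv) (T X) (Pi.single (β j) 1)
        = ∑ l, B⁻¹ l (β j) * fderiv ℝ (Φ j) X (Pi.single l 1) := by
      intro j
      rw [fderiv_comp _ ((hΦ j).differentiableAt) ((hTinvd _).differentiableAt),
        (hTinvd _).fderiv, hTinv₁]
      show fderiv ℝ (Φ j) X (L' (Pi.single (β j) 1)) = _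
      have h2 : L' (Pi.single (β j) 1) = ∑ l, B⁻¹ l (β j) • (Pi.single l 1 : Fin d → ℝ) := by
        rw [hL'app, Matrix.mulVec_single]
        ext i
        simp [Pi.single_apply, Finset.sum_ite_eq']
      rw [h2, map_sum]
      simp [smul_eq_mul]
    calc (∏ j ∈ S, fderiv ℝ (Φ j ∘ Tinv) (T X) (Pi.single (β j) 1)) *
          ∏ j ∈ Sᶜ, Φ j (Tinv (T X))
        = (∏ j ∈ S.attach, ∑ l, B⁻¹ l (β j.1) * fderiv ℝ (Φ j.1) X (Pi.single l 1)) *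
          ∏ j ∈ Sᶜ, Φ j X := by
          rw [← Finset.prod_attach S
            (fun j => fderiv ℝ (Φ j ∘ Tinv) (T X) (Pi.single (β j) 1))]
          congr 1
          · exact Finset.prod_congr rfl fun j _ => h1 j.1
          · exact Finset.prod_congr rfl fun j _ => by rw [hTinv₁]
      _ = (∑ α : {j // j ∈ S} → Fin d, ∏ j ∈ S.attach,
            B⁻¹ (α j) (β j.1) * fderiv ℝ (Φ j.1) X (Pi.single (α j) 1)) *
          ∏ j ∈ Sᶜ, Φ j X := by
          rw [← Finset.univ_eq_attach, Fintype.prod_sum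
            (fun (j : {j // j ∈ S}) (l : Fin d) =>
              B⁻¹ l (β j.1) * fderiv ℝ (Φ j.1) X (Pi.single l 1))]
      _ = _ := by
          rw [Finset.sum_mul]
          refine Finset.sum_congr rfl fun α _ => ?_
          rw [Finset.prod_mul_distrib, mul_assoc]
  have himg : T '' K₀ = T '' K₀ := rfl
  rw [MeasureTheory.integral_image_eq_integral_abs_det_fderiv_smul volume hK₀
    (fun x _ => (hTd x).hasFDerivWithinAt) (hTinj.injOn)]
  simp only [hdet, smul_eq_mul]
  calc ∫ X in K₀, |B.det| *
        ((∏ j ∈ S, fderiv ℝ (Φ j ∘ Tinv) (T X) (Pi.single (β j) 1)) *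
          ∏ j ∈ Sᶜ, Φ j (Tinv (T X)))
      = ∫ X in K₀, ∑ α : {j // j ∈ S} → Fin d,
          (|B.det| * ∏ j ∈ S.attach, B⁻¹ (α j) (β j.1)) *
          ((∏ j ∈ S.attach, fderiv ℝ (Φ j.1) X (Pi.single (α j) 1)) *
            ∏ j ∈ Sᶜ, Φ j X) := by
        refine setIntegral_congr_fun hK₀ fun X _ => ?_
        rw [key X, Finset.mul_sum]
        exact Finset.sum_congr rfl fun α _ => by ring
    _ = ∑ α : {j // j ∈ S} → Fin d,
          ∫ X in K₀, (|B.det| * ∏ j ∈ S.attach, B⁻¹ (α j) (β j.1)) *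
          ((∏ j ∈ S.attach, fderiv ℝ (Φ j.1) X (Pi.single (α j) 1)) *
            ∏ j ∈ Sᶜ, Φ j X) := by
        exact integral_finset_sum _ fun α _ => (hint α).const_mul _
    _ = _ := by
        refine Finset.sum_congr rfl fun α _ => ?_
        rw [MeasureTheory.integral_const_mul]
        ring
end

section
/- (Tensor representation for Poisson's equation under an affine map.) Let B be an invertible d×d real matrix, b ∈ ℝ^d, T(X) = B X + b, K₀ ⊆ ℝ^d measurable and K = T(K₀). Let Φ_1, Φ_2 : ℝ^d → ℝ be differentiable and assume that for all α_1, α_2 ∈ {1,…,d} the function X ↦ (∂Φ_1/∂X_{α_1})(X)(∂Φ_2/∂X_{α_2})(X) is Lebesgue integrable on K₀. Then ∫_K ∇(Φ_1∘T⁻¹)(x) · ∇(Φ_2∘T⁻¹)(x) dx = Σ_{α_1=1}^d Σ_{α_2=1}^d A⁰_{α_1 α_2} G^{α_1 α_2}, where A⁰_{α_1 α_2} = ∫_{K₀} (∂Φ_1/∂X_{α_1})(∂Φ_2/∂X_{α_2}) dX and G^{α_1 α_2} = |det B| Σ_{β=1}^d (B⁻¹)_{α_1 β} (B⁻¹)_{α_2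 β}. -/
open MeasureTheory

/-- Tensor representation for Poisson's equation under an affine map `T X = B X + b`:
`∫_K ∇(Φ₁∘T⁻¹) · ∇(Φ₂∘T⁻¹) dx = ∑_{α₁,α₂} A⁰_{α₁α₂} G^{α₁α₂}` with
`A⁰_{α₁α₂} = ∫_{K₀} ∂Φ₁/∂X_{α₁} ∂Φ₂/∂X_{α₂} dX` and
`G^{α₁α₂} = |det B| ∑_β (B⁻¹)_{α₁β} (B⁻¹)_{α₂β}`. -/
theorem stmt9 {d : ℕ} (B : Matrix (Fin d) (Fin d) ℝ) (hB : IsUnit B.det) (b : Fin d → ℝ)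
    (T Tinv : (Fin d → ℝ) → (Fin d → ℝ)) (hT : ∀ X, T X = B.mulVec X + b)
    (hTinv₁ : ∀ X, Tinv (T X) = X) (hTinv₂ : ∀ x, T (Tinv x) = x)
    (K₀ : Set (Fin d → ℝ)) (hK₀ : MeasurableSet K₀)
    (Φ₁ Φ₂ : (Fin d → ℝ) → ℝ) (h₁ : Differentiable ℝ Φ₁) (h₂ : Differentiable ℝ Φ₂)
    (hint : ∀ α₁ α₂ : Fin d, IntegrableOn
      (fun X => fderiv ℝ Φ₁ X (Pi.single α₁ 1) * fderiv ℝ Φ₂ X (Pi.single α₂ 1)) K₀) :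
    (∫ x in T '' K₀, ∑ γ : Fin d,
        fderiv ℝ (Φ₁ ∘ Tinv) x (Pi.single γ 1) * fderiv ℝ (Φ₂ ∘ Tinv) x (Pi.single γ 1))
      = ∑ α₁ : Fin d, ∑ α₂ : Fin d,
          (∫ X in K₀,
            fderiv ℝ Φ₁ X (Pi.single α₁ 1) * fderiv ℝ Φ₂ X (Pi.single α₂ 1)) *
          (|B.det| * ∑ γ : Fin d, B⁻¹ α₁ γ * B⁻¹ α₂ γ) := by
  classical
  set M : (Fin d → ℝ) →L[ℝ] (Fin d → ℝ) :=
    LinearMap.toContinuousLinearMap (Matrix.toLin' B) with hM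
  set N : (Fin d → ℝ) →L[ℝ] (Fin d → ℝ) :=
    LinearMap.toContinuousLinearMap (Matrix.toLin' B⁻¹) with hN
  have hMapp : ∀ v, M v = B.mulVec v := by
    intro v
    simp [hM, Matrix.toLin'_apply]
  have hNapp : ∀ v, N v = B⁻¹.mulVec v := by
    intro v
    simp [hN, Matrix.toLin'_apply]
  have hBinv : B⁻¹ * B = 1 := Matrix.nonsing_inv_mul B hB
  have hBinv' : B * B⁻¹ = 1 := Matrix.mul_nonsing_inv B hB
  -- explicit formula for Tinv
  have hTinvf : ∀ x, Tinv x = B⁻¹.mulVec (x - b) := by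
    intro x
    have hx : T (B⁻¹.mulVec (x - b)) = x := by
      rw [hT, Matrix.mulVec_mulVec, hBinv', Matrix.one_mulVec]
      abel
    calc Tinv x = Tinv (T (B⁻¹.mulVec (x - b))) := by rw [hx]
      _ = B⁻¹.mulVec (x - b) := hTinv₁ _
  -- derivative of T and Tinv
  have hTd : ∀ x, HasFDerivAt T M x := by
    intro x
    have : (fun X => M X + b) = T := by
      funext X; rw [hT, hMapp]
    exact this ▸ (M.hasFDerivAt.add_const b)
  have hTinvd : ∀ x, HasFDerivAt Tinv N x := by
    intro x
    have : (fun x => N (x - b)) = Tinv := by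
      funext x; rw [hTinvf, hNapp]
    exact this ▸ (N.hasFDerivAt.comp x ((hasFDerivAt_id x).sub_const b)
      |>.congr_fderiv (by ext v; simp))
  -- directional derivative expansion
  have hdir : ∀ (Φ : (Fin d → ℝ) → ℝ) (hΦ : Differentiable ℝ Φ) (x : Fin d → ℝ) (γ : Fin d),
      fderiv ℝ (Φ ∘ Tinv) x (Pi.single γ 1)
        = ∑ α : Fin d, B⁻¹ α γ * fderiv ℝ Φ (Tinv x) (Pi.single α 1) := by
    intro Φ hΦ x γ
    have hc : HasFDerivAt (Φ ∘ Tinv) ((fderiv ℝ Φ (Tinv x)).comp N) x :=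
      ((hΦ (Tinv x)).hasFDerivAt).comp x (hTinvd x)
    rw [hc.fderiv]
    have hNγ : N (Pi.single γ 1) = ∑ α : Fin d, B⁻¹ α γ • (Pi.single α 1 : Fin d → ℝ) := by
      rw [hNapp, Matrix.mulVec_single]
      funext i
      simp [Pi.single_apply, Finset.sum_apply]
    simp only [ContinuousLinearMap.comp_apply, hNγ, map_sum, _root_.map_smul, smul_eq_mul]
  -- change of variables
  have hinj : Set.InjOn T K₀ :=
    (Function.LeftInverse.injective hTinv₁).injOn
  have hdet : M.det = B.det := by
    rw [ContinuousLinearMap.det]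
    simp [hM, LinearMap.coe_toContinuousLinearMap, LinearMap.det_toLin']
  have hcov := integral_image_eq_integral_abs_det_fderiv_smul volume hK₀
      (fun x _ => (hTd x).hasFDerivWithinAt) hinj
      (fun x => ∑ γ : Fin d,
        fderiv ℝ (Φ₁ ∘ Tinv) x (Pi.single γ 1) * fderiv ℝ (Φ₂ ∘ Tinv) x (Pi.single γ 1))
  rw [hcov]
  -- pointwise computation of the integrand on K₀
  have hpt : ∀ X : Fin d → ℝ,
      |M.det| • (∑ γ : Fin d,
          fderiv ℝ (Φ₁ ∘ Tinv) (T X) (Pi.single γ 1) * fderiv ℝ (Φ₂ ∘ Tinv) (T X) (Pi.single γ 1))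
        = ∑ α₁ : Fin d, ∑ α₂ : Fin d,
            (|B.det| * ∑ γ : Fin d, B⁻¹ α₁ γ * B⁻¹ α₂ γ) *
              (fderiv ℝ Φ₁ X (Pi.single α₁ 1) * fderiv ℝ Φ₂ X (Pi.single α₂ 1)) := by
    intro X
    rw [hdet, smul_eq_mul]
    have h1 : ∀ γ, fderiv ℝ (Φ₁ ∘ Tinv) (T X) (Pi.single γ 1)
        = ∑ α : Fin d, B⁻¹ α γ * fderiv ℝ Φ₁ X (Pi.single α 1) := by
      intro γ; rw [hdir Φ₁ h₁, hTinv₁]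
    have h2 : ∀ γ, fderiv ℝ (Φ₂ ∘ Tinv) (T X) (Pi.single γ 1)
        = ∑ α : Fin d, B⁻¹ α γ * fderiv ℝ Φ₂ X (Pi.single α 1) := by
      intro γ; rw [hdir Φ₂ h₂, hTinv₁]
    simp only [h1, h2]
    calc |B.det| * ∑ γ : Fin d,
            (∑ α₁ : Fin d, B⁻¹ α₁ γ * fderiv ℝ Φ₁ X (Pi.single α₁ 1)) *
              (∑ α₂ : Fin d, B⁻¹ α₂ γ * fderiv ℝ Φ₂ X (Pi.single α₂ 1))
        = ∑ γ : Fin d, ∑ α₁ : Fin d, ∑ α₂ : Fin d,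
            |B.det| * (B⁻¹ α₁ γ * fderiv ℝ Φ₁ X (Pi.single α₁ 1)) *
              (B⁻¹ α₂ γ * fderiv ℝ Φ₂ X (Pi.single α₂ 1)) := by
          rw [Finset.mul_sum]
          refine Finset.sum_congr rfl fun γ _ => ?_
          rw [Finset.sum_mul_sum, Finset.mul_sum]
          refine Finset.sum_congr rfl fun α₁ _ => ?_
          rw [Finset.mul_sum]
          exact Finset.sum_congr rfl fun α₂ _ => by ring
      _ = ∑ α₁ : Fin d, ∑ γ : Fin d, ∑ α₂ : Fin d,
            |B.det| * (B⁻¹ α₁ γ * fderiv ℝ Φ₁ X (Pi.single α₁ 1)) *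
              (B⁻¹ α₂ γ * fderiv ℝ Φ₂ X (Pi.single α₂ 1)) := Finset.sum_comm
      _ = ∑ α₁ : Fin d, ∑ α₂ : Fin d, ∑ γ : Fin d,
            |B.det| * (B⁻¹ α₁ γ * fderiv ℝ Φ₁ X (Pi.single α₁ 1)) *
              (B⁻¹ α₂ γ * fderiv ℝ Φ₂ X (Pi.single α₂ 1)) :=
          Finset.sum_congr rfl fun _ _ => Finset.sum_comm
      _ = ∑ α₁ : Fin d, ∑ α₂ : Fin d,
            (|B.det| * ∑ γ : Fin d, B⁻¹ α₁ γ * B⁻¹ α₂ γ) *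
              (fderiv ℝ Φ₁ X (Pi.single α₁ 1) * fderiv ℝ Φ₂ X (Pi.single α₂ 1)) := by
          refine Finset.sum_congr rfl fun α₁ _ => Finset.sum_congr rfl fun α₂ _ => ?_
          rw [Finset.mul_sum, Finset.sum_mul]
          exact Finset.sum_congr rfl fun γ _ => by ring
  simp only [hpt]
  -- pull sums and constants out of the integral
  have hint' : ∀ α₁ α₂ : Fin d, IntegrableOn (fun X =>
      (|B.det| * ∑ γ : Fin d, B⁻¹ α₁ γ * B⁻¹ α₂ γ) *
        (fderiv ℝ Φ₁ X (Pi.single α₁ 1) * fderiv ℝ Φ₂ X (Pi.single α₂ 1))) K₀ :=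
    fun α₁ α₂ => (hint α₁ α₂).const_mul _
  rw [integral_finset_sum _ (fun α₁ _ => integrable_finset_sum _ (fun α₂ _ => hint' α₁ α₂))]
  refine Finset.sum_congr rfl fun α₁ _ => ?_
  rw [integral_finset_sum _ (fun α₂ _ => hint' α₁ α₂)]
  refine Finset.sum_congr rfl fun α₂ _ => ?_
  rw [integral_const_mul, mul_comm]
end

section
/- (Tensor representation for the strain–strain term of linear elasticity, first term.) Let B be an invertible d×d real matrix, b ∈ ℝ^d, T(X) = B X + b, K₀ ⊆ ℝ^d measurable and K = T(K₀). Let Φ¹, Φ² : ℝ^d → ℝ^d be differentiable vector-valued functions with components Φ¹[1],…,Φ¹[d] and Φ²[1],…,Φ²[d], and assume that for all α_1, α_2 ∈ {1,…,d} and all β ∈ {1,…,d} the function X ↦ (∂Φ¹[β]/∂X_{α_1})(X)(∂Φ²[β]/∂X_{α_2})(X) is Lebesgue integrable on K₀. Then (1/2) ∫_K Σ_{β=1}^d ∇(Φ¹[β]∘T⁻¹)(x) · ∇(Φ²[β]∘T⁻¹)(x) dx = Σ_{α_1=1}^d Σ_{α_2=1}^d A⁰_{α_1 α_2} G^{α_1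 α_2}, where A⁰_{α_1 α_2} = Σ_{β=1}^d ∫_{K₀} (∂Φ¹[β]/∂X_{α_1})(∂Φ²[β]/∂X_{α_2}) dX and G^{α_1 α_2} = (1/2) |det B| Σ_{β=1}^d (B⁻¹)_{α_1 β} (B⁻¹)_{α_2 β}. -/
open MeasureTheory

theorem sum_comm4 {d : ℕ} (f : Fin d → Fin d → Fin d → Fin d → ℝ) :
    ∑ β : Fin d, ∑ γ : Fin d, ∑ α₁ : Fin d, ∑ α₂ : Fin d, f β γ α₁ α₂
      = ∑ α₁ : Fin d, ∑ α₂ : Fin d, ∑ β : Fin d, ∑ γ : Fin d, f β γ α₁ α₂ := by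
  calc ∑ β : Fin d, ∑ γ : Fin d, ∑ α₁ : Fin d, ∑ α₂ : Fin d, f β γ α₁ α₂
      = ∑ β : Fin d, ∑ α₁ : Fin d, ∑ γ : Fin d, ∑ α₂ : Fin d, f β γ α₁ α₂ :=
        Finset.sum_congr rfl fun β _ => Finset.sum_comm
    _ = ∑ α₁ : Fin d, ∑ β : Fin d, ∑ γ : Fin d, ∑ α₂ : Fin d, f β γ α₁ α₂ :=
        Finset.sum_comm
    _ = ∑ α₁ : Fin d, ∑ β : Fin d, ∑ α₂ : Fin d, ∑ γ : Fin d, f β γ α₁ α₂ :=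
        Finset.sum_congr rfl fun α₁ _ => Finset.sum_congr rfl fun β _ => Finset.sum_comm
    _ = ∑ α₁ : Fin d, ∑ α₂ : Fin d, ∑ β : Fin d, ∑ γ : Fin d, f β γ α₁ α₂ :=
        Finset.sum_congr rfl fun α₁ _ => Finset.sum_comm

/-- Tensor representation for the (first grouped term of the) strain–strain bilinear form
of linear elasticity under an affine map `T X = B X + b`:
`(1/2) ∫_K ∑_β ∇(Φ¹[β]∘T⁻¹) · ∇(Φ²[β]∘T⁻¹) dx = ∑_{α₁,α₂} A⁰_{α₁α₂} G^{α₁α₂}` with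
`A⁰_{α₁α₂} = ∑_β ∫_{K₀} ∂Φ¹[β]/∂X_{α₁} ∂Φ²[β]/∂X_{α₂} dX` and
`G^{α₁α₂} = (1/2)|det B| ∑_β (B⁻¹)_{α₁β} (B⁻¹)_{α₂β}`. -/
theorem stmt10 {d : ℕ} (B : Matrix (Fin d) (Fin d) ℝ) (hB : IsUnit B.det) (b : Fin d → ℝ)
    (T Tinv : (Fin d → ℝ) → (Fin d → ℝ)) (hT : ∀ X, T X = B.mulVec X + b)
    (hTinv₁ : ∀ X, Tinv (T X) = X) (hTinv₂ : ∀ x, T (Tinv x) = x)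
    (K₀ : Set (Fin d → ℝ)) (hK₀ : MeasurableSet K₀)
    (Φ₁ Φ₂ : (Fin d → ℝ) → (Fin d → ℝ))
    (h₁ : ∀ β, Differentiable ℝ (fun X => Φ₁ X β))
    (h₂ : ∀ β, Differentiable ℝ (fun X => Φ₂ X β))
    (hint : ∀ α₁ α₂ β : Fin d, IntegrableOn
      (fun X => fderiv ℝ (fun Y => Φ₁ Y β) X (Pi.single α₁ 1) *
                fderiv ℝ (fun Y => Φ₂ Y β) X (Pi.single α₂ 1)) K₀) :
    (1 / 2 : ℝ) * (∫ x in T '' K₀, ∑ β : Fin d, ∑ γ : Fin d,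
        fderiv ℝ (fun y => Φ₁ (Tinv y) β) x (Pi.single γ 1) *
        fderiv ℝ (fun y => Φ₂ (Tinv y) β) x (Pi.single γ 1))
      = ∑ α₁ : Fin d, ∑ α₂ : Fin d,
          (∑ β : Fin d, ∫ X in K₀,
            fderiv ℝ (fun Y => Φ₁ Y β) X (Pi.single α₁ 1) *
            fderiv ℝ (fun Y => Φ₂ Y β) X (Pi.single α₂ 1)) *
          ((1 / 2 : ℝ) * |B.det| * ∑ γ : Fin d, B⁻¹ α₁ γ * B⁻¹ α₂ γ) := by
  classical
  set L1 : (Fin d → ℝ) →L[ℝ] (Fin d → ℝ) :=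
    LinearMap.toContinuousLinearMap (Matrix.mulVecLin B) with hL1
  set Linv : (Fin d → ℝ) →L[ℝ] (Fin d → ℝ) :=
    LinearMap.toContinuousLinearMap (Matrix.mulVecLin B⁻¹) with hLinv
  -- derivative of T
  have hTd : ∀ x, HasFDerivAt T L1 x := by
    intro x
    have : T = fun X => L1 X + b := by
      funext X
      simp [hT, hL1, Matrix.mulVecLin_apply]
    rw [this]
    exact (L1.hasFDerivAt).add_const b
  -- explicit form of Tinv
  have hTinv_eq : Tinv = fun x => B⁻¹.mulVec (x - b) := by
    funext x
    have h := hTinv₂ x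
    rw [hT] at h
    have h2 : B.mulVec (Tinv x) = x - b := eq_sub_iff_add_eq.mpr h
    calc Tinv x = B⁻¹.mulVec (B.mulVec (Tinv x)) := by
          rw [Matrix.mulVec_mulVec, Matrix.nonsing_inv_mul B hB, Matrix.one_mulVec]
      _ = B⁻¹.mulVec (x - b) := by rw [h2]
  have hTinvd : ∀ x, HasFDerivAt Tinv Linv x := by
    intro x
    have : Tinv = fun x => Linv (x - b) := by
      rw [hTinv_eq]; funext y; simp [hLinv, Matrix.mulVecLin_apply]
    rw [this]
    have := (Linv.hasFDerivAt (x := x - b)).comp x ((hasFDerivAt_id x).sub_const b)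
    simpa using this
  -- chain rule
  have key : ∀ (Φ : (Fin d → ℝ) → (Fin d → ℝ)) (hΦ : ∀ β, Differentiable ℝ (fun X => Φ X β))
      (β γ : Fin d) (x : Fin d → ℝ),
      fderiv ℝ (fun y => Φ (Tinv y) β) x (Pi.single γ 1)
        = ∑ α : Fin d, B⁻¹ α γ * fderiv ℝ (fun Y => Φ Y β) (Tinv x) (Pi.single α 1) := by
    intro Φ hΦ β γ x
    have hc : HasFDerivAt (fun y => Φ (Tinv y) β)
        ((fderiv ℝ (fun Y => Φ Y β) (Tinv x)).comp Linv) x :=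
      (((hΦ β) (Tinv x)).hasFDerivAt).comp x (hTinvd x)
    rw [hc.fderiv]
    have hsingle : Linv (Pi.single γ 1) = ∑ α : Fin d, B⁻¹ α γ • (Pi.single α 1 : Fin d → ℝ) := by
      funext i
      simp [hLinv, Matrix.mulVecLin_apply, Matrix.mulVec_single, Finset.sum_apply,
        Pi.single_apply, Finset.sum_ite_eq, mul_comm]
    rw [ContinuousLinearMap.comp_apply, hsingle, map_sum]
    simp [smul_eq_mul]
  -- injectivity and change of variables
  have hinj : Set.InjOn T K₀ := fun x _ y _ h => by rw [← hTinv₁ x, h, hTinv₁]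
  have hdet : L1.det = B.det := by
    have : (L1 : (Fin d → ℝ) →ₗ[ℝ] (Fin d → ℝ)) = Matrix.mulVecLin B := by
      simp [hL1]
    rw [ContinuousLinearMap.det, this, ← Matrix.toLin'_apply', LinearMap.det_toLin']
  have hCoV : ∀ g : (Fin d → ℝ) → ℝ,
      ∫ x in T '' K₀, g x = ∫ X in K₀, |B.det| * g (T X) := by
    intro g
    have := integral_image_eq_integral_abs_det_fderiv_smul (volume) hK₀
      (f' := fun _ => L1) (fun x _ => (hTd x).hasFDerivWithinAt) hinj g
    simpa [hdet, smul_eq_mul] using this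
  -- abbreviations
  set D₁ : Fin d → Fin d → (Fin d → ℝ) → ℝ :=
    fun α β X => fderiv ℝ (fun Y => Φ₁ Y β) X (Pi.single α 1) with hD₁
  set D₂ : Fin d → Fin d → (Fin d → ℝ) → ℝ :=
    fun α β X => fderiv ℝ (fun Y => Φ₂ Y β) X (Pi.single α 1) with hD₂
  rw [hCoV]
  have hintegrand : ∀ X : Fin d → ℝ,
      |B.det| * ∑ β : Fin d, ∑ γ : Fin d,
        fderiv ℝ (fun y => Φ₁ (Tinv y) β) (T X) (Pi.single γ 1) *
        fderiv ℝ (fun y => Φ₂ (Tinv y) β) (T X) (Pi.single γ 1)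
      = ∑ β : Fin d, ∑ γ : Fin d, ∑ α₁ : Fin d, ∑ α₂ : Fin d,
          (|B.det| * (B⁻¹ α₁ γ * B⁻¹ α₂ γ)) * (D₁ α₁ β X * D₂ α₂ β X) := by
    intro X
    rw [Finset.mul_sum]
    refine Finset.sum_congr rfl fun β _ => ?_
    rw [Finset.mul_sum]
    refine Finset.sum_congr rfl fun γ _ => ?_
    rw [key Φ₁ h₁ β γ (T X), key Φ₂ h₂ β γ (T X), hTinv₁, Finset.sum_mul_sum, Finset.mul_sum]
    refine Finset.sum_congr rfl fun α₁ _ => ?_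
    rw [Finset.mul_sum]
    refine Finset.sum_congr rfl fun α₂ _ => ?_
    simp [hD₁, hD₂]; ring
  rw [integral_congr_ae (Filter.Eventually.of_forall hintegrand)]
  -- integrability of each atom
  have hintc : ∀ β γ α₁ α₂ : Fin d, IntegrableOn
      (fun X => (|B.det| * (B⁻¹ α₁ γ * B⁻¹ α₂ γ)) * (D₁ α₁ β X * D₂ α₂ β X)) K₀ :=
    fun β γ α₁ α₂ => (hint α₁ α₂ β).const_mul _
  -- push the integral inside the four sums
  rw [integral_finset_sum _ (fun β _ => integrable_finset_sum _ (fun γ _ =>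
      integrable_finset_sum _ (fun α₁ _ => integrable_finset_sum _ (fun α₂ _ =>
      hintc β γ α₁ α₂))))]
  simp_rw [integral_finset_sum _ (fun _ _ => integrable_finset_sum _ (fun α₁ _ =>
      integrable_finset_sum _ (fun α₂ _ => hintc _ _ α₁ α₂))),
    integral_finset_sum _ (fun _ _ => integrable_finset_sum _ (fun α₂ _ => hintc _ _ _ α₂)),
    integral_finset_sum _ (fun _ _ => hintc _ _ _ _),
    MeasureTheory.integral_const_mul]
  rw [Finset.mul_sum]
  simp_rw [Finset.mul_sum]
  rw [sum_comm4]
  refine Finset.sum_congr rfl fun α₁ _ => Finset.sum_congr rfl fun α₂ _ => ?_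
  rw [Finset.sum_comm]
  refine Finset.sum_congr rfl fun γ _ => ?_
  rw [Finset.sum_mul]
  refine Finset.sum_congr rfl fun β _ => ?_
  simp only [hD₁, hD₂]
  ring
end

section
/- (Error representation via the dual problem.) Let V be a real Hilbert space, let A : V → V and M : V → ℝ be continuously differentiable (of class C¹), let u, U ∈ V and set f = A(u) (so u solves A(u) = f) and define the residual R(U) = A(U) − f. Define the mean-value derivative Ā' = ∫₀¹ A'(s U + (1−s) u) ds as a Bochner integral in the space of continuous linear operators on V, let ψ ∈ V be the Riesz representer of the mean-value derivative of M, i.e. ⟨v, ψ⟩ = (∫₀¹ M'(s U + (1−s) u) ds)(v) for all v ∈ V, and suppose φ ∈ V solves the dual problem (Ā')* φ = ψ, where (Ā')* is the Hilbert-space adjoint of Ā'. Then M(U) − M(u) = ⟨R(U), φ⟩. -/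
/-!
By the fundamental theorem of calculus along the segment from `u` to `U`, `M U - M u` and
`A U - A u` are the mean-value derivatives of `M` and `A` applied to `U - u`. Hence
`M U - M u = ⟪U - u, ψ⟫ = ⟪U - u, Ā'* φ⟫ = ⟪Ā' (U - u), φ⟫ = ⟪A U - f, φ⟫`.
-/

open RealInnerProductSpace

theorem ContDiff.sub_eq_intervalIntegral_fderiv_segment_apply
    {E F : Type*} [NormedAddCommGroup E] [NormedSpace ℝ E]
    [NormedAddCommGroup F] [NormedSpace ℝ F] [CompleteSpace F]
    {g : E → F} (hg : ContDiff ℝ 1 g) (x y : E) :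
    g y - g x = (∫ s in (0:ℝ)..1, fderiv ℝ g (s • y + (1 - s) • x)) (y - x) := by
  set γ : ℝ → E := fun s => s • y + (1 - s) • x
  have hγ : ∀ s, HasDerivAt γ (y - x) s := fun s => by
    convert ((hasDerivAt_id s).smul_const y).add (((hasDerivAt_id s).const_sub 1).smul_const x)
      using 1
    · rfl
    · simp [sub_eq_add_neg]
  have hg' : Continuous fun s => fderiv ℝ g (γ s) :=
    (hg.continuous_fderiv one_ne_zero).comp (by fun_prop)
  have hderiv : ∀ s ∈ Set.uIcc (0:ℝ) 1, HasDerivAt (g ∘ γ) (fderiv ℝ g (γ s) (y - x)) s :=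
    fun s _ => ((hg.differentiable one_ne_zero) (γ s)).hasFDerivAt.comp_hasDerivAt s (hγ s)
  rw [ContinuousLinearMap.intervalIntegral_apply (hg'.intervalIntegrable 0 1),
    intervalIntegral.integral_eq_sub_of_hasDerivAt hderiv
      ((hg'.clm_apply continuous_const).intervalIntegrable 0 1)]
  simp [γ]

/-- Error representation via the dual problem: with `f = A(u)`, residual
`R(U) = A(U) − f`, mean-value derivative `Ā' = ∫₀¹ A'(sU + (1−s)u) ds`, Riesz
representer `ψ` of the mean-value derivative of `M`, and dual solution `φ` of
`(Ā')* φ = ψ`, one has `M(U) − M(u) = ⟨R(U), φ⟩`. -/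
theorem stmt17 {V : Type*}
    [NormedAddCommGroup V] [InnerProductSpace ℝ V] [CompleteSpace V]
    (A : V → V) (M : V → ℝ) (hA : ContDiff ℝ 1 A) (hM : ContDiff ℝ 1 M)
    (u U : V) (f : V) (hf : f = A u)
    (Abar : V →L[ℝ] V)
    (hAbar : Abar = ∫ s in (0:ℝ)..1, fderiv ℝ A (s • U + (1 - s) • u))
    (ψ : V)
    (hψ : ∀ v, ⟪v, ψ⟫ = (∫ s in (0:ℝ)..1, fderiv ℝ M (s • U + (1 - s) • u)) v)
    (φ : V) (hφ : ContinuousLinearMap.adjoint Abar φ = ψ) :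
    M U - M u = ⟪A U - f, φ⟫ := by
  rw [hM.sub_eq_intervalIntegral_fderiv_segment_apply, ← hψ, ← hφ,
    ContinuousLinearMap.adjoint_inner_right, hf, hA.sub_eq_intervalIntegral_fderiv_segment_apply,
    hAbar]
end

section
/- (Error representation with Galerkin orthogonality.) Let V be a real Hilbert space, let A : V → V and M : V → ℝ be continuously differentiable (of class C¹), let u, U ∈ V, set f = A(u) and R(U) = A(U) − f. Define Ā' = ∫₀¹ A'(s U + (1−s) u) ds, let ψ ∈ V satisfy ⟨v, ψ⟩ = (∫₀¹ M'(s U + (1−s) u) ds)(v) for all v ∈ V, and let φ ∈ V solve (Ā')* φ = ψ. Suppose in addition that V̂_h ⊆ V is a subspace with Galerkin orthogonality ⟨R(U), v⟩ = 0 for all v ∈ V̂_h, and let π_h φ be any element of V̂_h. Then M(U) − M(u) = ⟨R(U), φ − π_h φ⟩. -/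
open RealInnerProductSpace

/-!
Along the segment `γ s = s • U + (1 - s) • u` the fundamental theorem of calculus gives
`A U - A u = Ā' (U - u)` and `M U - M u = ⟨U - u, ψ⟩`. Taking adjoints,
`M U - M u = ⟨Ā' (U - u), φ⟩ = ⟨R(U), φ⟩`, and Galerkin orthogonality lets us subtract `π_h φ`.
-/

section SegmentIntegral

variable {E F : Type*} [NormedAddCommGroup E] [NormedSpace ℝ E]
  [NormedAddCommGroup F] [NormedSpace ℝ F]

theorem hasDerivAt_segment (u U : E) (s : ℝ) :
    HasDerivAt (fun s : ℝ => s • U + (1 - s) • u) (U - u) s := by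
  have h := ((hasDerivAt_id s).smul_const U).add
    (((hasDerivAt_const s (1 : ℝ)).sub (hasDerivAt_id s)).smul_const u)
  convert h using 1
  · rfl
  · module

theorem ContDiff.sub_eq_integral_fderiv_segment_apply [CompleteSpace F] {g : E → F}
    (hg : ContDiff ℝ 1 g) (u U : E) :
    g U - g u = (∫ s in (0:ℝ)..1, fderiv ℝ g (s • U + (1 - s) • u)) (U - u) := by
  have hγ : Continuous fun s : ℝ => s • U + (1 - s) • u := by fun_prop
  have hcont : Continuous fun s : ℝ => fderiv ℝ g (s • U + (1 - s) • u) :=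
    (hg.continuous_fderiv one_ne_zero).comp hγ
  have hderiv : ∀ t ∈ Set.uIcc (0:ℝ) 1, HasDerivAt (fun s => g (s • U + (1 - s) • u))
      (fderiv ℝ g (t • U + (1 - t) • u) (U - u)) t := fun t _ =>
    (hg.differentiable one_ne_zero _).hasFDerivAt.comp_hasDerivAt t (hasDerivAt_segment u U t)
  rw [ContinuousLinearMap.intervalIntegral_apply (hcont.intervalIntegrable 0 1),
    intervalIntegral.integral_eq_sub_of_hasDerivAt hderiv
      (((ContinuousLinearMap.apply ℝ F (U - u)).continuous.comp hcont).intervalIntegrable 0 1)]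
  simp

end SegmentIntegral

/-- Error representation with Galerkin orthogonality: under the hypotheses of the dual
error representation, if moreover `⟨R(U), v⟩ = 0` for all `v` in the subspace `V̂_h` and
`π_h φ ∈ V̂_h`, then `M(U) − M(u) = ⟨R(U), φ − π_h φ⟩`. -/
theorem stmt18 {V : Type*}
    [NormedAddCommGroup V] [InnerProductSpace ℝ V] [CompleteSpace V]
    (A : V → V) (M : V → ℝ) (hA : ContDiff ℝ 1 A) (hM : ContDiff ℝ 1 M)
    (u U : V) (f : V) (hf : f = A u)
    (Abar : V →L[ℝ] V)
    (hAbar : Abar = ∫ s in (0:ℝ)..1, fderiv ℝ A (s • U + (1 - s) • u))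
    (ψ : V)
    (hψ : ∀ v, ⟪v, ψ⟫ = (∫ s in (0:ℝ)..1, fderiv ℝ M (s • U + (1 - s) • u)) v)
    (φ : V) (hφ : ContinuousLinearMap.adjoint Abar φ = ψ)
    (Vh : Submodule ℝ V) (hGal : ∀ v ∈ Vh, ⟪A U - f, v⟫ = 0)
    (πφ : V) (hπφ : πφ ∈ Vh) :
    M U - M u = ⟪A U - f, φ - πφ⟫ := by
  have hAeq : A U - f = Abar (U - u) := by
    rw [hf, hAbar, hA.sub_eq_integral_fderiv_segment_apply u U]
  calc M U - M u = ⟪U - u, ψ⟫ := by rw [hψ, hM.sub_eq_integral_fderiv_segment_apply u U]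
    _ = ⟪Abar (U - u), φ⟫ := by rw [← hφ, ContinuousLinearMap.adjoint_inner_right]
    _ = ⟪A U - f, φ - πφ⟫ := by rw [inner_sub_right, hGal πφ hπφ, sub_zero, hAeq]
end

section
/- (Error representation for the weak (variational) dual problem.) Let V and V̂ be real Banach spaces, let a : V → (V̂ → ℝ) assign to each z ∈ V a continuous linear functional a(z; ·) on V̂, with z ↦ a(z; ·) continuously differentiable (of class C¹) as a map into the continuous dual of V̂, let L be a continuous linear functional on V̂, and let M : V → ℝ be continuously differentiable. Let u, U ∈ V and suppose u solves the variational problem a(u; v) = L(v) for all v ∈ V̂. Suppose φ ∈ V̂ solves the weak dual problem: for every w ∈ V, ∫₀¹ a'(s U + (1−s) u; φ, w) ds = ∫₀¹ M'(s U + (1−s) u)(w) ds, where a'(z; v, w) denotes the Fréchet derivative of z ↦ a(z; v) at z in the direction w. Then M(U) − M(u) = a(U; φ) − L(φ). -/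
/-!
By the fundamental theorem of calculus along the segment from `u` to `U`, `M U - M u` and
`a U φ - a u φ` are the integrals over `[0, 1]` of the derivatives of `M` and of `z ↦ a z φ` in the
direction `U - u`; the dual problem with `w = U - u` equates them, and `a u φ = L φ`.
-/

lemma ContDiff.sub_eq_integral_fderiv_segment {E F : Type*}
    [NormedAddCommGroup E] [NormedSpace ℝ E]
    [NormedAddCommGroup F] [NormedSpace ℝ F] [CompleteSpace F]
    {f : E → F} (hf : ContDiff ℝ 1 f) (u U : E) :
    f U - f u = ∫ s in (0:ℝ)..1, fderiv ℝ f (s • U + (1 - s) • u) (U - u) := by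
  set γ : ℝ → E := fun s => s • U + (1 - s) • u
  have hγ : ∀ s, HasDerivAt γ (U - u) s := fun s => by
    simpa [γ, sub_eq_add_neg] using
      ((hasDerivAt_id s).smul_const U).fun_add ((hasDerivAt_id s).const_sub 1 |>.smul_const u)
  have hderiv : ∀ s ∈ Set.uIcc (0:ℝ) 1,
      HasDerivAt (f ∘ γ) (fderiv ℝ f (γ s) (U - u)) s := fun s _ =>
    (hf.differentiable one_ne_zero (γ s)).hasFDerivAt.comp_hasDerivAt s (hγ s)
  have hcont : Continuous fun s => fderiv ℝ f (γ s) (U - u) :=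
    ((hf.continuous_fderiv one_ne_zero).comp (by fun_prop)).clm_apply continuous_const
  simpa [γ] using (intervalIntegral.integral_eq_sub_of_hasDerivAt hderiv
    (hcont.intervalIntegrable 0 1)).symm

theorem stmt19_general {V Vhat : Type*}
    [NormedAddCommGroup V] [NormedSpace ℝ V]
    [NormedAddCommGroup Vhat] [NormedSpace ℝ Vhat]
    (a : V → (Vhat →L[ℝ] ℝ)) (ha : ContDiff ℝ 1 a)
    (L : Vhat →L[ℝ] ℝ) (M : V → ℝ) (hM : ContDiff ℝ 1 M)
    (u U : V) (hu : ∀ v, a u v = L v)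
    (φ : Vhat)
    (hφ : ∀ w : V,
      (∫ s in (0:ℝ)..1, fderiv ℝ (fun z => a z φ) (s • U + (1 - s) • u) w)
        = ∫ s in (0:ℝ)..1, fderiv ℝ M (s • U + (1 - s) • u) w) :
    M U - M u = a U φ - L φ := by
  have ha_φ : ContDiff ℝ 1 (fun z => a z φ) := ha.clm_apply contDiff_const
  rw [← hu φ, hM.sub_eq_integral_fderiv_segment, ha_φ.sub_eq_integral_fderiv_segment, hφ]

/-- Error representation for the weak (variational) dual problem: if `u` solves
`a(u; v) = L(v)` for all `v ∈ V̂` and `φ ∈ V̂` solves the weak dual problem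
`∫₀¹ a'(sU + (1−s)u; φ, w) ds = ∫₀¹ M'(sU + (1−s)u)(w) ds` for every `w ∈ V`, then
`M(U) − M(u) = a(U; φ) − L(φ)`. -/
theorem stmt19 {V Vhat : Type*}
    [NormedAddCommGroup V] [NormedSpace ℝ V] [CompleteSpace V]
    [NormedAddCommGroup Vhat] [NormedSpace ℝ Vhat] [CompleteSpace Vhat]
    (a : V → (Vhat →L[ℝ] ℝ)) (ha : ContDiff ℝ 1 a)
    (L : Vhat →L[ℝ] ℝ) (M : V → ℝ) (hM : ContDiff ℝ 1 M)
    (u U : V) (hu : ∀ v, a u v = L v)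
    (φ : Vhat)
    (hφ : ∀ w : V,
      (∫ s in (0:ℝ)..1, fderiv ℝ (fun z => a z φ) (s • U + (1 - s) • u) w)
        = ∫ s in (0:ℝ)..1, fderiv ℝ M (s • U + (1 - s) • u) w) :
    M U - M u = a U φ - L φ :=
  stmt19_general a ha L M hM u U hu φ hφ
end
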